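/- Let η : I → ℝ^d be C² with η(t) ≠ 0 and η̇(t) ≠ 0 on I, satisfying μ η̈ = −c(|η|) η + F(t) for a scalar function c and a bounded force |F(t)| ≤ C. Define e(t) = √(|η|²|η̇|² − ⟨η,η̇⟩²) and assume e(t) > 0 on I. Then |ė(t)| ≤ (1/μ)|η(t)|·|F(t)| ≤ (C/μ)|η(t)| for all t ∈ I. -/

import Mathlib

/-!
Write `w = ‖η‖² η̇ − ⟪η, η̇⟫ η` (the component of `η̇` orthogonal to `η`, scaled by `‖η‖²`).
Differentiating `e² = ‖η‖²‖η̇‖² − ⟪η, η̇⟫²` along the motion gives `(e²)' = 2⟪w, η̈⟫`, the terms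
containing only `η̇` cancelling. Since `w ⊥ η`, the central force drops out:
`μ⟪w, η̈⟫ = ⟪w, F⟫`. Finally `‖w‖ = ‖η‖ e`, so `|ė| = |⟪w, F⟫| / (μ e) ≤ ‖η‖‖F‖ / μ`.
-/

open RealInnerProductSpace

section

variable {E : Type*} [NormedAddCommGroup E] [InnerProductSpace ℝ E]

def gramDet (x v : E) : ℝ := ‖x‖ ^ 2 * ‖v‖ ^ 2 - ⟪x, v⟫ ^ 2

def scaledRejection (x v : E) : E := ‖x‖ ^ 2 • v - ⟪x, v⟫ • x

theorem inner_scaledRejection_self (x v : E) : ⟪scaledRejection x v, x⟫ = 0 := by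
  simp only [scaledRejection, inner_sub_left, real_inner_smul_left, real_inner_self_eq_norm_sq,
    real_inner_comm x v]
  ring

theorem norm_sq_scaledRejection (x v : E) :
    ‖scaledRejection x v‖ ^ 2 = ‖x‖ ^ 2 * gramDet x v := by
  rw [← real_inner_self_eq_norm_sq]
  simp only [scaledRejection, inner_sub_left, inner_sub_right, real_inner_smul_left,
    real_inner_smul_right]
  simp only [gramDet, real_inner_self_eq_norm_sq, real_inner_comm x v]
  ring

theorem norm_scaledRejection (x v : E) :
    ‖scaledRejection x v‖ = ‖x‖ * √(gramDet x v) := by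
  rw [← Real.sqrt_sq (norm_nonneg (scaledRejection x v)), norm_sq_scaledRejection,
    Real.sqrt_mul (sq_nonneg _), Real.sqrt_sq (norm_nonneg x)]

theorem hasDerivAt_gramDet {η v : ℝ → E} {a : E} {t : ℝ}
    (hη : HasDerivAt η (v t) t) (hv : HasDerivAt v a t) :
    HasDerivAt (fun s ↦ gramDet (η s) (v s)) (2 * ⟪scaledRejection (η t) (v t), a⟫) t := by
  refine ((hη.norm_sq.mul hv.norm_sq).sub ((hη.inner ℝ hv).pow 2)).congr_deriv ?_
  simp only [scaledRejection, inner_sub_left, real_inner_smul_left, real_inner_self_eq_norm_sq]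
  ring

theorem hasDerivAt_sqrt_gramDet {η v : ℝ → E} {a : E} {t : ℝ}
    (hη : HasDerivAt η (v t) t) (hv : HasDerivAt v a t) (hpos : 0 < gramDet (η t) (v t)) :
    HasDerivAt (fun s ↦ √(gramDet (η s) (v s)))
      (⟪scaledRejection (η t) (v t), a⟫ / √(gramDet (η t) (v t))) t := by
  convert (hasDerivAt_gramDet hη hv).sqrt hpos.ne' using 1
  rw [mul_div_mul_left _ _ two_ne_zero]

theorem abs_inner_scaledRejection_div_sqrt_le {x v a F : E} {μ k : ℝ} (hμ : 0 < μ)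
    (hpos : 0 < gramDet x v) (heq : μ • a = k • x + F) :
    |⟪scaledRejection x v, a⟫ / √(gramDet x v)| ≤ 1 / μ * ‖x‖ * ‖F‖ := by
  have he : 0 < √(gramDet x v) := Real.sqrt_pos.mpr hpos
  have hforce : μ * ⟪scaledRejection x v, a⟫ = ⟪scaledRejection x v, F⟫ := by
    rw [← real_inner_smul_right, heq, inner_add_right, real_inner_smul_right,
      inner_scaledRejection_self, mul_zero, zero_add]
  rw [abs_div, abs_of_pos he, div_le_iff₀ he]
  calc |⟪scaledRejection x v, a⟫|
      = |⟪scaledRejection x v, F⟫| / μ := by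
        rw [← hforce, abs_mul, abs_of_pos hμ, mul_div_cancel_left₀ _ hμ.ne']
    _ ≤ ‖scaledRejection x v‖ * ‖F‖ / μ := by gcongr; exact abs_real_inner_le_norm _ _
    _ = 1 / μ * ‖x‖ * ‖F‖ * √(gramDet x v) := by rw [norm_scaledRejection]; ring

end

theorem stmt_15_general {d : ℕ} (μ C t₁ t₂ : ℝ) (hμ : 0 < μ)
    (c : ℝ → ℝ) (η v a F : ℝ → EuclideanSpace ℝ (Fin d))
    (hη : ∀ t ∈ Set.Ioo t₁ t₂, HasDerivAt η (v t) t)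
    (hv : ∀ t ∈ Set.Ioo t₁ t₂, HasDerivAt v (a t) t)
    (heq : ∀ t ∈ Set.Ioo t₁ t₂, μ • a t = -(c ‖η t‖) • η t + F t)
    (hF : ∀ t ∈ Set.Ioo t₁ t₂, ‖F t‖ ≤ C)
    (hepos : ∀ t ∈ Set.Ioo t₁ t₂,
      0 < Real.sqrt (‖η t‖ ^ 2 * ‖v t‖ ^ 2 - (inner ℝ (η t) (v t) : ℝ) ^ 2)) :
    ∀ t ∈ Set.Ioo t₁ t₂,
      |deriv (fun s =>
          Real.sqrt (‖η s‖ ^ 2 * ‖v s‖ ^ 2 - (inner ℝ (η s) (v s) : ℝ) ^ 2)) t|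
        ≤ (1 / μ) * ‖η t‖ * ‖F t‖ ∧
      (1 / μ) * ‖η t‖ * ‖F t‖ ≤ (C / μ) * ‖η t‖ := by
  intro t ht
  have hpos : 0 < gramDet (η t) (v t) := Real.sqrt_pos.mp (hepos t ht)
  have hderiv := (hasDerivAt_sqrt_gramDet (hη t ht) (hv t ht) hpos).deriv
  refine ⟨?_, ?_⟩
  · exact hderiv ▸ abs_inner_scaledRejection_div_sqrt_le hμ hpos (heq t ht)
  · have hFt := hF t ht
    calc 1 / μ * ‖η t‖ * ‖F t‖ = ‖F t‖ / μ * ‖η t‖ := by ring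
      _ ≤ C / μ * ‖η t‖ := by gcongr

/-- Bound on the derivative of `e(t) = √(|η|²|η̇|² − ⟨η,η̇⟩²)` along a motion
`μ η̈ = −c(|η|) η + F(t)` with bounded force `|F| ≤ C`: on the open interval,
`|ė(t)| ≤ (1/μ)|η(t)||F(t)| ≤ (C/μ)|η(t)|`. -/
theorem stmt_15 {d : ℕ} (μ C t₁ t₂ : ℝ) (hμ : 0 < μ) (hC : 0 ≤ C)
    (c : ℝ → ℝ) (η v a F : ℝ → EuclideanSpace ℝ (Fin d))
    (hne : ∀ t ∈ Set.Ioo t₁ t₂, η t ≠ 0)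
    (hvne : ∀ t ∈ Set.Ioo t₁ t₂, v t ≠ 0)
    (hη : ∀ t ∈ Set.Ioo t₁ t₂, HasDerivAt η (v t) t)
    (hv : ∀ t ∈ Set.Ioo t₁ t₂, HasDerivAt v (a t) t)
    (heq : ∀ t ∈ Set.Ioo t₁ t₂, μ • a t = -(c ‖η t‖) • η t + F t)
    (hF : ∀ t ∈ Set.Ioo t₁ t₂, ‖F t‖ ≤ C)
    (hepos : ∀ t ∈ Set.Ioo t₁ t₂,
      0 < Real.sqrt (‖η t‖ ^ 2 * ‖v t‖ ^ 2 - (inner ℝ (η t) (v t) : ℝ) ^ 2)) :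
    ∀ t ∈ Set.Ioo t₁ t₂,
      |deriv (fun s =>
          Real.sqrt (‖η s‖ ^ 2 * ‖v s‖ ^ 2 - (inner ℝ (η s) (v s) : ℝ) ^ 2)) t|
        ≤ (1 / μ) * ‖η t‖ * ‖F t‖ ∧
      (1 / μ) * ‖η t‖ * ‖F t‖ ≤ (C / μ) * ‖η t‖ :=
  stmt_15_general μ C t₁ t₂ hμ c η v a F hη hv heq hF hepos
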